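/- arXiv:1506.09159 — 3 statements merged into one kernel-verified Lean document; each statement's English description precedes it below -/
import Mathlib

section
/- Let q ∈ (0,1), s ∈ (0,1) and x > 0. Then Γ_q(x+s) ≤ (Γ_q(x))^{1-s} · (Γ_q(x+1))^{s}. -/
/-- The q-deformed Gamma function:
    `Γ_q(x) = (1-q)^(1-x) * ∏_{n=0}^∞ (1-q^(n+1))/(1-q^(n+x))`. -/
noncomputable def qGamma (q x : ℝ) : ℝ :=
  (1 - q) ^ (1 - x) * ∏' n : ℕ, (1 - q ^ ((n : ℝ) + 1)) / (1 - q ^ ((n : ℝ) + x))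

/-- The q-bracket: `[x]_q = (1-q^x)/(1-q)`. -/
noncomputable def qBracket (q x : ℝ) : ℝ := (1 - q ^ x) / (1 - q)

/-!
Each factor `(1 - q^(n+1)) / (1 - q^(n+x))` of the product defining `Γ_q` is log-convex in `x`:
by weighted AM-GM and Bernoulli's inequality `q^s ≤ 1 - s + s q`,
`(1 - q^a)^(1-s) (1 - q^(a+1))^s ≤ 1 - q^a (1 - s + s q) ≤ 1 - q^(a+s)`.
The prefactor `(1-q)^(1-x)` is log-linear in `x`, and a convergent product of log-convex
positive factors is log-convex, since it is the exponential of a convergent sum of logarithms.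
-/

open Real

lemma tprod_le_tprod_rpow_mul_tprod_rpow {ι : Type*} {f g h : ι → ℝ} {a b : ℝ}
    (hf : ∀ i, 0 < f i) (hg : ∀ i, 0 < g i) (hh : ∀ i, 0 < h i)
    (hfs : Summable fun i ↦ log (f i)) (hgs : Summable fun i ↦ log (g i))
    (hhs : Summable fun i ↦ log (h i)) (hfgh : ∀ i, f i ≤ g i ^ a * h i ^ b) :
    ∏' i, f i ≤ (∏' i, g i) ^ a * (∏' i, h i) ^ b := by
  rw [← rexp_tsum_eq_tprod hf hfs, ← rexp_tsum_eq_tprod hg hgs, ← rexp_tsum_eq_tprod hh hhs,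
    ← exp_mul, ← exp_mul, ← exp_add, exp_le_exp, ← tsum_mul_right, ← tsum_mul_right,
    ← (hgs.mul_right a).tsum_add (hhs.mul_right b)]
  refine hfs.tsum_le_tsum (fun i ↦ ?_) ((hgs.mul_right a).add (hhs.mul_right b))
  calc log (f i) ≤ log (g i ^ a * h i ^ b) := log_le_log (hf i) (hfgh i)
    _ = log (g i) * a + log (h i) * b := by
      rw [log_mul (rpow_pos_of_pos (hg i) a).ne' (rpow_pos_of_pos (hh i) b).ne',
        log_rpow (hg i), log_rpow (hh i), mul_comm a, mul_comm b]

section OneSubRpow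

variable {q : ℝ}

lemma one_sub_rpow_pos (hq₀ : 0 ≤ q) (hq₁ : q < 1) {c : ℝ} (hc : 0 < c) : 0 < 1 - q ^ c :=
  sub_pos.2 (rpow_lt_one hq₀ hq₁ hc)

lemma summable_log_one_sub_rpow_natCast_add (hq₀ : 0 < q) (hq₁ : q < 1) (c : ℝ) :
    Summable fun n : ℕ ↦ log (1 - q ^ ((n : ℝ) + c)) := by
  have hgeom : Summable fun n : ℕ ↦ q ^ ((n : ℝ) + c) :=
    ((summable_geometric_of_lt_one hq₀.le hq₁).mul_right (q ^ c)).congr fun n ↦ by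
      rw [rpow_add hq₀, rpow_natCast]
  simpa only [← sub_eq_add_neg] using summable_log_one_add_of_summable hgeom.neg

lemma one_sub_rpow_rpow_mul_one_sub_rpow_add_one_rpow_le (hq₀ : 0 < q) (hq₁ : q ≤ 1) {a s : ℝ}
    (ha : 0 ≤ a) (hs₀ : 0 ≤ s) (hs₁ : s ≤ 1) :
    (1 - q ^ a) ^ (1 - s) * (1 - q ^ (a + 1)) ^ s ≤ 1 - q ^ (a + s) := by
  have hqa : 0 < q ^ a := rpow_pos_of_pos hq₀ a
  have hbernoulli : q ^ s ≤ 1 + s * (q - 1) := by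
    simpa using rpow_one_add_le_one_add_mul_self (s := q - 1) (by linarith) hs₀ hs₁
  calc (1 - q ^ a) ^ (1 - s) * (1 - q ^ (a + 1)) ^ s
      ≤ (1 - s) * (1 - q ^ a) + s * (1 - q ^ (a + 1)) :=
        geom_mean_le_arith_mean2_weighted (by linarith) hs₀
          (sub_nonneg.2 (rpow_le_one hq₀.le hq₁ ha))
          (sub_nonneg.2 (rpow_le_one hq₀.le hq₁ (by linarith))) (by ring)
    _ = 1 - q ^ a * (1 + s * (q - 1)) := by rw [rpow_add_one hq₀.ne']; ring
    _ ≤ 1 - q ^ (a + s) := by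
        rw [rpow_add hq₀]
        nlinarith [mul_le_mul_of_nonneg_left hbernoulli hqa.le]

end OneSubRpow

noncomputable def qGammaFactor (q x : ℝ) (n : ℕ) : ℝ :=
  (1 - q ^ ((n : ℝ) + 1)) / (1 - q ^ ((n : ℝ) + x))

section QGammaFactor

variable {q x : ℝ}

lemma qGammaFactor_pos (hq₀ : 0 < q) (hq₁ : q < 1) (hx : 0 < x) (n : ℕ) :
    0 < qGammaFactor q x n :=
  div_pos (one_sub_rpow_pos hq₀.le hq₁ (by positivity))
    (one_sub_rpow_pos hq₀.le hq₁ (by positivity))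

lemma summable_log_qGammaFactor (hq₀ : 0 < q) (hq₁ : q < 1) (hx : 0 < x) :
    Summable fun n ↦ log (qGammaFactor q x n) := by
  refine ((summable_log_one_sub_rpow_natCast_add hq₀ hq₁ 1).sub
    (summable_log_one_sub_rpow_natCast_add hq₀ hq₁ x)).congr fun n ↦ ?_
  rw [qGammaFactor, log_div (one_sub_rpow_pos hq₀.le hq₁ (by positivity)).ne'
    (one_sub_rpow_pos hq₀.le hq₁ (by positivity)).ne']

lemma qGammaFactor_add_le (hq₀ : 0 < q) (hq₁ : q < 1) (hx : 0 < x) {s : ℝ} (hs₀ : 0 ≤ s)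
    (hs₁ : s ≤ 1) (n : ℕ) :
    qGammaFactor q (x + s) n ≤ qGammaFactor q x n ^ (1 - s) * qGammaFactor q (x + 1) n ^ s := by
  have hnum : 0 < 1 - q ^ ((n : ℝ) + 1) := one_sub_rpow_pos hq₀.le hq₁ (by positivity)
  have hx₀ : 0 < 1 - q ^ ((n : ℝ) + x) := one_sub_rpow_pos hq₀.le hq₁ (by positivity)
  have hx₁ : 0 < 1 - q ^ ((n : ℝ) + x + 1) := one_sub_rpow_pos hq₀.le hq₁ (by positivity)
  rw [qGammaFactor, qGammaFactor, qGammaFactor, ← add_assoc, ← add_assoc,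
    div_rpow hnum.le hx₀.le, div_rpow hnum.le hx₁.le, div_mul_div_comm, ← rpow_add hnum,
    sub_add_cancel, rpow_one]
  refine div_le_div_of_nonneg_left hnum.le (mul_pos (rpow_pos_of_pos hx₀ _)
    (rpow_pos_of_pos hx₁ _)) ?_
  exact one_sub_rpow_rpow_mul_one_sub_rpow_add_one_rpow_le hq₀ hq₁.le (by positivity) hs₀ hs₁

end QGammaFactor

theorem qGamma_log_convex_ineq (q s x : ℝ) (hq : q ∈ Set.Ioo (0 : ℝ) 1)
    (hs : s ∈ Set.Ioo (0 : ℝ) 1) (hx : 0 < x) :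
    qGamma q (x + s) ≤ qGamma q x ^ (1 - s) * qGamma q (x + 1) ^ s := by
  obtain ⟨hq₀, hq₁⟩ := hq
  obtain ⟨hs₀, hs₁⟩ := hs
  have hx₁ : 0 < x + 1 := by linarith
  have hxs : 0 < x + s := by linarith
  have h1q : 0 < 1 - q := by linarith
  have hprod : ∏' n, qGammaFactor q (x + s) n ≤
      (∏' n, qGammaFactor q x n) ^ (1 - s) * (∏' n, qGammaFactor q (x + 1) n) ^ s :=
    tprod_le_tprod_rpow_mul_tprod_rpow (qGammaFactor_pos hq₀ hq₁ hxs)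
      (qGammaFactor_pos hq₀ hq₁ hx) (qGammaFactor_pos hq₀ hq₁ hx₁)
      (summable_log_qGammaFactor hq₀ hq₁ hxs) (summable_log_qGammaFactor hq₀ hq₁ hx)
      (summable_log_qGammaFactor hq₀ hq₁ hx₁) (qGammaFactor_add_le hq₀ hq₁ hx hs₀.le hs₁.le)
  have hprefactor : (1 - q) ^ (1 - (x + s)) =
      ((1 - q) ^ (1 - x)) ^ (1 - s) * ((1 - q) ^ (1 - (x + 1))) ^ s := by
    rw [← rpow_mul h1q.le, ← rpow_mul h1q.le, ← rpow_add h1q]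
    ring_nf
  have hprod_nonneg : ∀ y, 0 < y → 0 ≤ ∏' n, qGammaFactor q y n := fun y hy ↦
    tprod_nonneg fun n ↦ (qGammaFactor_pos hq₀ hq₁ hy n).le
  change (1 - q) ^ (1 - (x + s)) * ∏' n, qGammaFactor q (x + s) n ≤
    ((1 - q) ^ (1 - x) * ∏' n, qGammaFactor q x n) ^ (1 - s) *
      ((1 - q) ^ (1 - (x + 1)) * ∏' n, qGammaFactor q (x + 1) n) ^ s
  rw [mul_rpow (by positivity) (hprod_nonneg x hx), mul_rpow (by positivity) (hprod_nonneg _ hx₁),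
    mul_mul_mul_comm, ← hprefactor]
  gcongr
end

section
/- Let q ∈ (0,1), s ∈ (0,1) and x > 0. Then Γ_q(x+1) ≤ [x+s]_q^{1-s} · Γ_q(x+s). -/
open Real Set

noncomputable def logQPochhammer (q t : ℝ) : ℝ := ∑' n : ℕ, log (1 - q ^ ((n : ℝ) + t))

section
variable {q : ℝ}

lemma one_sub_rpow_pos_s3 (hq : q ∈ Ioo 0 1) {t : ℝ} (ht : 0 < t) : 0 < 1 - q ^ t :=
  sub_pos.2 (rpow_lt_one hq.1.le hq.2 ht)

lemma summable_log_one_sub_rpow (hq : q ∈ Ioo 0 1) (t : ℝ) :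
    Summable fun n : ℕ => log (1 - q ^ ((n : ℝ) + t)) := by
  have hgeom : Summable fun n : ℕ => -(q ^ t * q ^ n) :=
    ((summable_geometric_of_lt_one hq.1.le hq.2).mul_left _).neg
  refine (Real.summable_log_one_add_of_summable hgeom).congr fun n => ?_
  rw [rpow_add hq.1, rpow_natCast, sub_eq_add_neg, mul_comm]

lemma logQPochhammer_eq_log_add (hq : q ∈ Ioo 0 1) (t : ℝ) :
    logQPochhammer q t = log (1 - q ^ t) + logQPochhammer q (t + 1) := by
  rw [logQPochhammer, (summable_log_one_sub_rpow hq t).tsum_eq_zero_add, logQPochhammer]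
  congr 1
  · simp only [Nat.cast_zero, zero_add]
  · congr 1 with n
    push_cast
    ring_nf

lemma concaveOn_log_one_sub_rpow (hq : q ∈ Ioo 0 1) :
    ConcaveOn ℝ (Ioi 0) fun t : ℝ => log (1 - q ^ t) := by
  refine ⟨convex_Ioi 0, fun a ha b hb α β hα hβ hαβ => ?_⟩
  have hpos := convex_Ioi (0 : ℝ) (one_sub_rpow_pos_s3 hq ha) (one_sub_rpow_pos_s3 hq hb) hα hβ hαβ
  have hconv := (convexOn_rpow_left hq.1).2 (mem_univ a) (mem_univ b) hα hβ hαβ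
  simp only [smul_eq_mul, mem_Ioi] at hpos hconv ⊢
  calc α * log (1 - q ^ a) + β * log (1 - q ^ b)
      ≤ log (α * (1 - q ^ a) + β * (1 - q ^ b)) :=
        strictConcaveOn_log_Ioi.concaveOn.2 (one_sub_rpow_pos_s3 hq ha) (one_sub_rpow_pos_s3 hq hb)
          hα hβ hαβ
    _ ≤ log (1 - q ^ (α * a + β * b)) := log_le_log hpos (by linarith)

lemma concaveOn_logQPochhammer (hq : q ∈ Ioo 0 1) : ConcaveOn ℝ (Ioi 0) (logQPochhammer q) := by
  refine ⟨convex_Ioi 0, fun a ha b hb α β hα hβ hαβ => ?_⟩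
  have hsum (t : ℝ) := summable_log_one_sub_rpow hq t
  simp only [logQPochhammer, smul_eq_mul]
  have hcomb := ((hsum a).mul_left α).add ((hsum b).mul_left β)
  rw [← tsum_mul_left, ← tsum_mul_left,
    ← ((hsum a).mul_left α).tsum_add ((hsum b).mul_left β)]
  refine hcomb.tsum_le_tsum (fun n => ?_) (hsum _)
  have hna : (n : ℝ) + a ∈ Ioi 0 := by simp only [mem_Ioi] at ha ⊢; positivity
  have hnb : (n : ℝ) + b ∈ Ioi 0 := by simp only [mem_Ioi] at hb ⊢; positivity
  have hn := (concaveOn_log_one_sub_rpow hq).2 hna hnb hα hβ hαβ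
  simp only [smul_eq_mul] at hn
  rwa [show α * ((n : ℝ) + a) + β * ((n : ℝ) + b) = n + (α * a + β * b) by
    linear_combination (n : ℝ) * hαβ] at hn

lemma qGamma_eq_exp (hq : q ∈ Ioo 0 1) {y : ℝ} (hy : 0 < y) :
    qGamma q y = exp ((1 - y) * log (1 - q) + (logQPochhammer q 1 - logQPochhammer q y)) := by
  have hpos {t : ℝ} (ht : 0 < t) (n : ℕ) : 0 < 1 - q ^ ((n : ℝ) + t) :=
    one_sub_rpow_pos_s3 hq (by positivity)
  have hlog (n : ℕ) : log ((1 - q ^ ((n : ℝ) + 1)) / (1 - q ^ ((n : ℝ) + y))) =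
      log (1 - q ^ ((n : ℝ) + 1)) - log (1 - q ^ ((n : ℝ) + y)) :=
    log_div (hpos one_pos n).ne' (hpos hy n).ne'
  have hsum1 := summable_log_one_sub_rpow hq 1
  have hsumy := summable_log_one_sub_rpow hq y
  rw [qGamma, exp_add, mul_comm (1 - y), exp_mul, exp_log (sub_pos.2 hq.2),
    ← rexp_tsum_eq_tprod (fun n => div_pos (hpos one_pos n) (hpos hy n))
      (by simpa only [hlog] using hsum1.sub hsumy),
    logQPochhammer, logQPochhammer, ← hsum1.tsum_sub hsumy]
  simp only [hlog]

lemma qBracket_eq_exp (hq : q ∈ Ioo 0 1) {y : ℝ} (hy : 0 < y) :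
    qBracket q y = exp (log (1 - q ^ y) - log (1 - q)) := by
  rw [exp_sub, exp_log (one_sub_rpow_pos_s3 hq hy), exp_log (sub_pos.2 hq.2), qBracket]

end

theorem qGamma_lower (q s x : ℝ) (hq : q ∈ Set.Ioo (0 : ℝ) 1)
    (hs : s ∈ Set.Ioo (0 : ℝ) 1) (hx : 0 < x) :
    qGamma q (x + 1) ≤ qBracket q (x + s) ^ (1 - s) * qGamma q (x + s) := by
  have hxs : 0 < x + s := by linarith [hs.1]
  have hconc := (concaveOn_logQPochhammer hq).2 (mem_Ioi.2 hxs)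
    (mem_Ioi.2 (show 0 < x + s + 1 by linarith)) hs.1.le (sub_nonneg.2 hs.2.le)
    (add_sub_cancel s 1)
  simp only [smul_eq_mul] at hconc
  rw [show s * (x + s) + (1 - s) * (x + s + 1) = x + 1 by ring] at hconc
  have hshift := logQPochhammer_eq_log_add hq (x + s)
  rw [qGamma_eq_exp hq (by linarith), qGamma_eq_exp hq hxs, qBracket_eq_exp hq hxs, ← exp_mul,
    ← exp_add, exp_le_exp]
  rw [hshift] at hconc ⊢
  linarith
end

section
/- Let q ∈ (0,1) be fixed and define H(x) = √(π_q) · Γ_q(x+1) / Γ_q(x + 1/2) for x > 0, where π_q = (Γ_q(1/2))². Then H(x) tends to 1 as x → 0⁺ and H(x) tends to 1 + √q as x → 1⁻; in particular the bounds 1/√(π_q) and (1+√q)/√(π_q) for Γ_q(x+1)/Γ_q(x+1/2) on (0,1) are sharp. -/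
open Real Filter Set

/-!
Writing `Γ_q(x) = (1-q)^(1-x) (q;q)_∞ / (q^x;q)_∞`, the infinite product `(q^x;q)_∞` converges
locally uniformly and to a positive limit on `x > 0` because `q^(n+x) ≤ q^n`. Hence `Γ_q` is
positive and continuous there, and `(q^x;q)_∞ = (1-q^x) (q^(x+1);q)_∞` gives
`Γ_q(x+1) = [x]_q Γ_q(x)`. So `H(x) = Γ_q(1/2) Γ_q(x+1) / Γ_q(x+1/2)` is continuous at `0` and `1`,
with `H(0) = Γ_q(1) = 1` and `H(1) = Γ_q(2) / [1/2]_q = 1 + √q`.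
-/

/-- The infinite q-Pochhammer symbol `(q^x; q)_∞`. -/
noncomputable def qPochhammerInf (q x : ℝ) : ℝ := ∏' n : ℕ, (1 - q ^ ((n : ℝ) + x))

section

variable {q x : ℝ}

lemma rpow_natCast_add_le_pow (hq0 : 0 < q) (hq1 : q ≤ 1) (hx : 0 ≤ x) (n : ℕ) :
    q ^ ((n : ℝ) + x) ≤ q ^ n := by
  rw [rpow_add hq0, rpow_natCast]
  exact mul_le_of_le_one_right (by positivity) (rpow_le_one hq0.le hq1 hx)

lemma summable_rpow_natCast_add (hq0 : 0 < q) (hq1 : q < 1) (hx : 0 ≤ x) :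
    Summable fun n : ℕ => q ^ ((n : ℝ) + x) :=
  (summable_geometric_of_lt_one hq0.le hq1).of_nonneg_of_le (fun _ => by positivity)
    (rpow_natCast_add_le_pow hq0 hq1.le hx)

lemma one_sub_rpow_natCast_add_pos (hq0 : 0 < q) (hq1 : q < 1) (hx : 0 < x) (n : ℕ) :
    0 < 1 - q ^ ((n : ℝ) + x) :=
  sub_pos.2 (rpow_lt_one hq0.le hq1 (by positivity))

lemma multipliable_one_sub_rpow_natCast_add (hq0 : 0 < q) (hq1 : q < 1) (hx : 0 ≤ x) :
    Multipliable fun n : ℕ => 1 - q ^ ((n : ℝ) + x) := by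
  simpa only [sub_eq_add_neg] using
    Real.multipliable_one_add_of_summable (summable_rpow_natCast_add hq0 hq1 hx).neg

lemma qPochhammerInf_pos (hq0 : 0 < q) (hq1 : q < 1) (hx : 0 < x) : 0 < qPochhammerInf q x := by
  have hlog : Summable fun n : ℕ => log (1 - q ^ ((n : ℝ) + x)) := by
    simpa only [sub_eq_add_neg] using
      Real.summable_log_one_add_of_summable (summable_rpow_natCast_add hq0 hq1 hx.le).neg
  rw [qPochhammerInf, ← Real.rexp_tsum_eq_tprod (one_sub_rpow_natCast_add_pos hq0 hq1 hx) hlog]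
  exact exp_pos _

lemma qPochhammerInf_eq_one_sub_mul (hq0 : 0 < q) (hq1 : q < 1) (hx : 0 ≤ x) :
    qPochhammerInf q x = (1 - q ^ x) * qPochhammerInf q (x + 1) := by
  have hshift (n : ℕ) : ((n + 1 : ℕ) : ℝ) + x = n + (x + 1) := by push_cast; ring
  have h := tprod_eq_zero_mul' (f := fun n : ℕ => 1 - q ^ ((n : ℝ) + x)) <| by
    simpa only [hshift] using
      multipliable_one_sub_rpow_natCast_add hq0 hq1 (x := x + 1) (by linarith)
  simpa only [qPochhammerInf, hshift, Nat.cast_zero, zero_add] using h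

lemma continuousOn_qPochhammerInf (hq0 : 0 < q) (hq1 : q < 1) :
    ContinuousOn (qPochhammerInf q) (Ioi 0) := by
  have hcont (n : ℕ) : Continuous fun x : ℝ => q ^ ((n : ℝ) + x) :=
    continuous_const.rpow (continuous_const.add continuous_id) fun _ => Or.inl hq0.ne'
  have hprod : HasProdLocallyUniformlyOn (fun (n : ℕ) x => 1 + -q ^ ((n : ℝ) + x))
      (fun x => ∏' n : ℕ, (1 + -q ^ ((n : ℝ) + x))) (Ioi 0) := by
    refine Summable.hasProdLocallyUniformlyOn_nat_one_add isOpen_Ioi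
      (summable_geometric_of_lt_one hq0.le hq1) (Eventually.of_forall fun n x hx => ?_)
      fun n => (hcont n).neg.continuousOn
    rw [norm_neg, norm_of_nonneg (by positivity)]
    exact rpow_natCast_add_le_pow hq0 hq1.le (le_of_lt hx) n
  refine (hprod.tendstoLocallyUniformlyOn_finsetRange.continuousOn <| Frequently.of_forall
    fun N => continuousOn_finsetProd _ fun n _ => (continuous_const.add (hcont n).neg).continuousOn
    ).congr fun x _ => ?_
  simp only [qPochhammerInf, sub_eq_add_neg]

lemma qGamma_eq_mul_div (hq0 : 0 < q) (hq1 : q < 1) (hx : 0 < x) :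
    qGamma q x = (1 - q) ^ (1 - x) * (qPochhammerInf q 1 / qPochhammerInf q x) := by
  rw [qGamma, (multipliable_one_sub_rpow_natCast_add hq0 hq1 zero_le_one).tprod_div₀
    (multipliable_one_sub_rpow_natCast_add hq0 hq1 hx.le) (qPochhammerInf_pos hq0 hq1 hx).ne']
  rfl

lemma qGamma_pos (hq0 : 0 < q) (hq1 : q < 1) (hx : 0 < x) : 0 < qGamma q x := by
  have hP1 := qPochhammerInf_pos hq0 hq1 one_pos
  have hPx := qPochhammerInf_pos hq0 hq1 hx
  have h1q : 0 < 1 - q := sub_pos.2 hq1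
  rw [qGamma_eq_mul_div hq0 hq1 hx]
  positivity

lemma continuousOn_qGamma (hq0 : 0 < q) (hq1 : q < 1) : ContinuousOn (qGamma q) (Ioi 0) := by
  refine ContinuousOn.congr ?_ fun x hx => qGamma_eq_mul_div hq0 hq1 hx
  refine ContinuousOn.mul ?_ (continuousOn_const.div (continuousOn_qPochhammerInf hq0 hq1)
    fun x hx => (qPochhammerInf_pos hq0 hq1 hx).ne')
  exact (continuous_const.rpow (continuous_const.sub continuous_id)
    fun _ => Or.inl (sub_pos.2 hq1).ne').continuousOn

lemma qGamma_one (hq0 : 0 < q) (hq1 : q < 1) : qGamma q 1 = 1 := by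
  rw [qGamma_eq_mul_div hq0 hq1 one_pos, sub_self, rpow_zero, one_mul,
    div_self (qPochhammerInf_pos hq0 hq1 one_pos).ne']

lemma qGamma_add_one (hq0 : 0 < q) (hq1 : q < 1) (hx : 0 < x) :
    qGamma q (x + 1) = qBracket q x * qGamma q x := by
  have h1q : 0 < 1 - q := sub_pos.2 hq1
  have h1qx : 0 < 1 - q ^ x := sub_pos.2 (rpow_lt_one hq0.le hq1 hx)
  have hPx1 := qPochhammerInf_pos hq0 hq1 (x := x + 1) (by linarith)
  rw [qGamma_eq_mul_div hq0 hq1 (by linarith), qGamma_eq_mul_div hq0 hq1 hx,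
    qPochhammerInf_eq_one_sub_mul hq0 hq1 hx.le, qBracket, sub_eq_add_neg 1 x, rpow_add h1q,
    rpow_one, show 1 - (x + 1) = -x by ring]
  field_simp

lemma qBracket_one_half (hq0 : 0 < q) (hq1 : q < 1) : qBracket q (1 / 2) = (1 + √q)⁻¹ := by
  have h1q : 1 - q ≠ 0 := (sub_pos.2 hq1).ne'
  have hsq := sq_sqrt hq0.le
  rw [qBracket, ← sqrt_eq_rpow]
  field_simp
  linear_combination -hsq

end

theorem qGammaRatio_H_limits (q : ℝ) (hq : q ∈ Set.Ioo (0 : ℝ) 1) :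
    Filter.Tendsto
      (fun x : ℝ => Real.sqrt ((qGamma q (1 / 2)) ^ 2) * qGamma q (x + 1) / qGamma q (x + 1 / 2))
      (nhdsWithin 0 (Set.Ioi 0)) (nhds 1) ∧
    Filter.Tendsto
      (fun x : ℝ => Real.sqrt ((qGamma q (1 / 2)) ^ 2) * qGamma q (x + 1) / qGamma q (x + 1 / 2))
      (nhdsWithin 1 (Set.Iio 1)) (nhds (1 + Real.sqrt q)) := by
  obtain ⟨hq0, hq1⟩ := hq
  set H := fun x : ℝ => √(qGamma q (1 / 2) ^ 2) * qGamma q (x + 1) / qGamma q (x + 1 / 2)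
  have hΓ (c : ℝ) {y : ℝ} (hy : 0 < y + c) : ContinuousAt (fun x => qGamma q (x + c)) y :=
    ((continuousOn_qGamma hq0 hq1).continuousAt (Ioi_mem_nhds hy)).comp (f := fun x => x + c)
      (by fun_prop)
  have hH (y : ℝ) (hy : -(1 / 2) < y) : ContinuousAt H y :=
    (continuousAt_const.mul (hΓ 1 (by linarith))).div (hΓ (1 / 2) (by linarith))
      (qGamma_pos hq0 hq1 (by linarith)).ne'
  have hΓhalf := qGamma_pos hq0 hq1 (x := 1 / 2) (by norm_num)
  have hH0 : H 0 = 1 := by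
    simp only [H, zero_add, qGamma_one hq0 hq1, sqrt_sq hΓhalf.le]
    field_simp
  have hH1 : H 1 = 1 + √q := by
    have hΓ2 : qGamma q (1 + 1) = 1 := by
      rw [qGamma_add_one hq0 hq1 one_pos, qGamma_one hq0 hq1, qBracket, rpow_one,
        div_self (sub_pos.2 hq1).ne', one_mul]
    simp only [H, hΓ2, add_comm (1 : ℝ) (1 / 2),
      qGamma_add_one hq0 hq1 (by norm_num : (0 : ℝ) < 1 / 2), qBracket_one_half hq0 hq1,
      sqrt_sq hΓhalf.le]
    field_simp
  exact ⟨hH0 ▸ (hH 0 (by norm_num)).tendsto.mono_left nhdsWithin_le_nhds,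
    hH1 ▸ (hH 1 (by norm_num)).tendsto.mono_left nhdsWithin_le_nhds⟩
end
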